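/- Fix ω ∈ Ω, λ₁ ∈ ℝ, and N ∈ ℕ such that every entry of A^{(N)}(ω) is at least 1. Assume that at the point θ^N ω: (a) there exists a nonzero v₁ ∈ ℝ^k with lim_{n→∞}(1/n) log ‖v₁ A^{(n)}(θ^N ω)‖₁ = λ₁, and (b) for every w ∈ ℝ^k, limsup_{n→∞}(1/n) log ‖w A^{(n)}(θ^N ω)‖₁ ≤ λ₁. Then for every nonzero v ∈ ℝ^k with all coordinates nonnegative, the limit lim_{n→∞}(1/n) log ‖v A^{(n)}(ω)‖₁ exists and equals λ₁. -/

import Mathlib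

open MeasureTheory Filter Topology

/-- The matrix cocycle: `matIter θ A n ω = A(ω)A(θω)⋯A(θ^{n-1}ω)` (with `matIter θ A 0 ω = 1`). -/
noncomputable def matIter {Ω : Type*} {k : ℕ} (θ : Ω → Ω)
    (A : Ω → Matrix (Fin k) (Fin k) ℝ) : ℕ → Ω → Matrix (Fin k) (Fin k) ℝ
  | 0, _ => 1
  | n + 1, ω => A ω * matIter θ A n (θ ω)

/-- The ℓ¹ norm of a row vector: `‖v‖₁ = Σᵢ |vᵢ|`. -/
noncomputable def l1norm {k : ℕ} (v : Fin k → ℝ) : ℝ := ∑ i, |v i|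

/-!
Write `M n = A^{(n)}(θ^N ω)`, a matrix with entries in `ℕ`, and `S n = ‖𝟙 M n‖₁` for the sum of
its entries. Every `‖w M n‖₁` is at most `‖w‖₁ S n`, so (a) and `log (S n) ≥ 0` give
`liminf (1/n) log S n ≥ λ₁`, while (b) for `w = 𝟙` gives the `limsup` bound; the `limsup` is
meaningful because the entries of `M n` are at most `k ^ n`. The vector `u = v A^{(N)}(ω)` has all
coordinates at least `‖v‖₁ > 0`, so `‖u M n‖₁` and `S n` agree up to bounded factors, and
`v A^{(N + n)}(ω) = u M n`.
-/

open Matrix Real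

section Analysis

lemma log_le_abs_log_add_of_le_mul {x b y : ℝ} (hx : 0 ≤ x) (hxy : x ≤ b * y)
    (hy : 0 ≤ log y) : log x ≤ |log b| + log y := by
  rcases hx.eq_or_lt with rfl | hx
  · rw [log_zero]; positivity
  have hby : 0 < b * y := hx.trans_le hxy
  calc log x ≤ log (b * y) := log_le_log hx hxy
    _ = log b + log y := log_mul (left_ne_zero_of_mul hby.ne') (right_ne_zero_of_mul hby.ne')
    _ ≤ |log b| + log y := by gcongr; exact le_abs_self _

lemma abs_log_sub_log_le_of_mul_le_of_le_mul {x y a b : ℝ} (ha : 0 < a) (hy : 0 ≤ y)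
    (hax : a * y ≤ x) (hxb : x ≤ b * y) : |log x - log y| ≤ max |log a| |log b| := by
  rcases hy.eq_or_lt with rfl | hy
  · obtain rfl : x = 0 := le_antisymm (by simpa using hxb) (by simpa using hax)
    simp
  have hx : 0 < x := (mul_pos ha hy).trans_le hax
  have hb : 0 < b := pos_of_mul_pos_left (hx.trans_le hxb) hy.le
  have hlow : log a + log y ≤ log x := by
    rw [← log_mul ha.ne' hy.ne']; exact log_le_log (mul_pos ha hy) hax
  have hup : log x ≤ log b + log y := by
    rw [← log_mul hb.ne' hy.ne']; exact log_le_log hx hxb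
  rw [abs_sub_le_iff]
  constructor
  · linarith [le_abs_self (log b), le_max_right |log a| |log b|]
  · linarith [neg_abs_le (log a), le_max_left |log a| |log b|]

lemma isBoundedUnder_le_inv_mul_log {x : ℕ → ℝ} {D : ℝ} (hx : ∀ n, 0 ≤ x n)
    (hxD : ∀ n, x n ≤ D ^ (n + 1)) :
    IsBoundedUnder (· ≤ ·) atTop (fun n : ℕ => (n : ℝ)⁻¹ * log (x n)) := by
  refine isBoundedUnder_of_eventually_le (a := 2 * |log D|) ?_
  filter_upwards [eventually_ge_atTop 1] with n hn
  have hn : (1 : ℝ) ≤ n := by exact_mod_cast hn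
  have hlog : log (x n) ≤ (n + 1) * |log D| := by
    rcases (hx n).eq_or_lt with h | h
    · rw [← h, log_zero]; positivity
    calc log (x n) ≤ log (D ^ (n + 1)) := log_le_log h (hxD n)
      _ = (n + 1) * log D := by rw [log_pow]; push_cast; ring
      _ ≤ (n + 1) * |log D| := by gcongr; exact le_abs_self _
  calc (n : ℝ)⁻¹ * log (x n) ≤ (n : ℝ)⁻¹ * ((n + 1) * |log D|) := by gcongr
    _ = (1 + (n : ℝ)⁻¹) * |log D| := by field_simp
    _ ≤ 2 * |log D| := by gcongr; linarith [inv_le_one_of_one_le₀ hn]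

lemma tendsto_of_le_of_limsup_le {α : Type*} {l : Filter α} {f g : α → ℝ} {L : ℝ}
    (hg : Tendsto g l (𝓝 L)) (hgf : ∀ᶠ x in l, g x ≤ f x) (hf : limsup f l ≤ L)
    (hbdd : IsBoundedUnder (· ≤ ·) l f) : Tendsto f l (𝓝 L) :=
  tendsto_order.2
    ⟨fun _ hb => (hg.eventually (eventually_gt_nhds hb)).mp (hgf.mono fun _ h1 h2 => h2.trans_le h1),
      fun _ hb => eventually_lt_of_limsup_lt (hf.trans_lt hb) hbdd⟩

lemma tendsto_inv_mul_of_abs_sub_le {f g : ℕ → ℝ} {C L : ℝ}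
    (hg : Tendsto (fun n : ℕ => (n : ℝ)⁻¹ * g n) atTop (𝓝 L)) (hfg : ∀ n, |f n - g n| ≤ C) :
    Tendsto (fun n : ℕ => (n : ℝ)⁻¹ * f n) atTop (𝓝 L) := by
  have h0 : Tendsto (fun n : ℕ => (n : ℝ)⁻¹ * (f n - g n)) atTop (𝓝 0) := by
    refine squeeze_zero_norm (a := fun n : ℕ => (n : ℝ)⁻¹ * C) (fun n => ?_) ?_
    · rw [norm_mul, norm_inv, RCLike.norm_natCast, Real.norm_eq_abs]
      exact mul_le_mul_of_nonneg_left (hfg n) (by positivity)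
    · simpa using tendsto_inv_atTop_nhds_zero_nat.mul_const C
  simpa using (hg.add h0).congr fun n => by ring

lemma tendsto_inv_natCast_add_mul {f : ℕ → ℝ} {L : ℝ} (N : ℕ)
    (hf : Tendsto (fun n : ℕ => (n : ℝ)⁻¹ * f n) atTop (𝓝 L)) :
    Tendsto (fun n : ℕ => ((n + N : ℕ) : ℝ)⁻¹ * f n) atTop (𝓝 L) := by
  have h := (tendsto_natCast_div_add_atTop (N : ℝ)).mul hf
  rw [one_mul] at h
  refine h.congr' ?_
  filter_upwards [eventually_ne_atTop 0] with n hn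
  push_cast
  field_simp

end Analysis

section L1norm

variable {k : ℕ}

lemma l1norm_nonneg (v : Fin k → ℝ) : 0 ≤ l1norm v :=
  Finset.sum_nonneg fun i _ => abs_nonneg (v i)

lemma l1norm_pos {v : Fin k → ℝ} (hv : v ≠ 0) : 0 < l1norm v := by
  obtain ⟨i, hi⟩ := Function.ne_iff.mp hv
  exact Finset.sum_pos' (fun j _ => abs_nonneg (v j)) ⟨i, Finset.mem_univ i, abs_pos.mpr hi⟩

lemma l1norm_vecMul_le (w : Fin k → ℝ) (M : Matrix (Fin k) (Fin k) ℝ) :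
    l1norm (w ᵥ* M) ≤ ∑ i, |w i| * ∑ j, |M i j| := by
  simp only [l1norm, vecMul, dotProduct, Finset.mul_sum]
  rw [Finset.sum_comm]
  refine Finset.sum_le_sum fun j _ => (Finset.abs_sum_le_sum_abs _ _).trans_eq ?_
  simp only [abs_mul]

lemma l1norm_vecMul_of_nonneg {w : Fin k → ℝ} {M : Matrix (Fin k) (Fin k) ℝ}
    (hw : ∀ i, 0 ≤ w i) (hM : ∀ i j, 0 ≤ M i j) :
    l1norm (w ᵥ* M) = ∑ i, w i * ∑ j, M i j := by
  simp only [l1norm, vecMul, dotProduct, Finset.mul_sum]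
  rw [Finset.sum_comm]
  exact Finset.sum_congr rfl fun j _ =>
    abs_of_nonneg (Finset.sum_nonneg fun i _ => mul_nonneg (hw i) (hM i j))

lemma l1norm_one_vecMul {M : Matrix (Fin k) (Fin k) ℝ} (hM : ∀ i j, 0 ≤ M i j) :
    l1norm (1 ᵥ* M) = ∑ i, ∑ j, M i j := by
  simp [l1norm_vecMul_of_nonneg (w := 1) (fun _ => zero_le_one) hM]

lemma l1norm_vecMul_le_mul_l1norm_one_vecMul (w : Fin k → ℝ) {M : Matrix (Fin k) (Fin k) ℝ}
    (hM : ∀ i j, 0 ≤ M i j) : l1norm (w ᵥ* M) ≤ l1norm w * l1norm (1 ᵥ* M) := by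
  have hrow : ∀ i, ∑ j, |M i j| ≤ l1norm (1 ᵥ* M) := fun i => by
    rw [l1norm_one_vecMul hM]
    simp only [abs_of_nonneg (hM _ _)]
    exact Finset.single_le_sum (f := fun i => ∑ j, M i j)
      (fun i _ => Finset.sum_nonneg fun j _ => hM i j) (Finset.mem_univ i)
  calc l1norm (w ᵥ* M) ≤ ∑ i, |w i| * ∑ j, |M i j| := l1norm_vecMul_le w M
    _ ≤ ∑ i, |w i| * l1norm (1 ᵥ* M) := by gcongr with i; exact hrow i
    _ = l1norm w * l1norm (1 ᵥ* M) := (Finset.sum_mul _ _ _).symm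

lemma mul_l1norm_one_vecMul_le {w : Fin k → ℝ} {M : Matrix (Fin k) (Fin k) ℝ} {c : ℝ}
    (hc : 0 ≤ c) (hw : ∀ i, c ≤ w i) (hM : ∀ i j, 0 ≤ M i j) :
    c * l1norm (1 ᵥ* M) ≤ l1norm (w ᵥ* M) := by
  rw [l1norm_one_vecMul hM, l1norm_vecMul_of_nonneg (fun i => hc.trans (hw i)) hM,
    Finset.mul_sum]
  gcongr with i
  · exact Finset.sum_nonneg fun j _ => hM i j
  · exact hw i

lemma l1norm_vecMul_le_of_abs_le_one (w : Fin k → ℝ) {M : Matrix (Fin k) (Fin k) ℝ}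
    (hM : ∀ i j, |M i j| ≤ 1) : l1norm (w ᵥ* M) ≤ k * l1norm w := by
  calc l1norm (w ᵥ* M) ≤ ∑ i, |w i| * ∑ j, |M i j| := l1norm_vecMul_le w M
    _ ≤ ∑ i, |w i| * k := by
        gcongr with i
        simpa using Finset.sum_le_sum fun j (_ : j ∈ Finset.univ) => hM i j
    _ = k * l1norm w := by rw [l1norm, ← Finset.sum_mul, mul_comm]

end L1norm

section Cocycle

variable {Ω : Type*} {k : ℕ} (θ : Ω → Ω) (A : Ω → Matrix (Fin k) (Fin k) ℝ)

lemma matIter_add (m n : ℕ) (ω : Ω) :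
    matIter θ A (m + n) ω = matIter θ A m ω * matIter θ A n (θ^[m] ω) := by
  induction m generalizing ω with
  | zero => simp [matIter]
  | succ m ih =>
    rw [Nat.add_right_comm, matIter, ih, matIter, mul_assoc, Function.iterate_succ_apply]

lemma vecMul_matIter_add (v : Fin k → ℝ) (m n : ℕ) (ω : Ω) :
    v ᵥ* matIter θ A (m + n) ω = (v ᵥ* matIter θ A m ω) ᵥ* matIter θ A n (θ^[m] ω) := by
  rw [matIter_add, vecMul_vecMul]

lemma matIter_apply_mem {R : Subsemiring ℝ} (hA : ∀ ω i j, A ω i j ∈ R) (n : ℕ) (ω : Ω)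
    (i j : Fin k) : matIter θ A n ω i j ∈ R := by
  induction n generalizing ω i j with
  | zero =>
    rw [matIter, one_apply]
    split_ifs
    exacts [R.one_mem, R.zero_mem]
  | succ n ih =>
    rw [matIter, mul_apply]
    exact R.sum_mem fun l _ => R.mul_mem (hA ω i l) (ih _ l j)

lemma l1norm_vecMul_matIter_le (hA : ∀ ω i j, |A ω i j| ≤ 1) (w : Fin k → ℝ) (n : ℕ)
    (ω : Ω) : l1norm (w ᵥ* matIter θ A n ω) ≤ k ^ n * l1norm w := by
  induction n generalizing w ω with
  | zero => simp [matIter]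
  | succ n ih =>
    rw [matIter, ← vecMul_vecMul, pow_succ, mul_assoc]
    exact (ih _ _).trans (by gcongr; exact l1norm_vecMul_le_of_abs_le_one w (hA ω))

end Cocycle

lemma tendsto_inv_mul_log_l1norm_vecMul_matIter_of_pos {Ω : Type*} {k : ℕ} (θ : Ω → Ω)
    (A : Ω → Matrix (Fin k) (Fin k) ℝ) (h01 : ∀ ω i j, A ω i j = 0 ∨ A ω i j = 1) (ω : Ω)
    {lam1 : ℝ} (v₁ : Fin k → ℝ)
    (hv₁ : Tendsto (fun n : ℕ => (n : ℝ)⁻¹ * log (l1norm (v₁ ᵥ* matIter θ A n ω)))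
      atTop (𝓝 lam1))
    (hb : limsup (fun n : ℕ => (n : ℝ)⁻¹ * log (l1norm (1 ᵥ* matIter θ A n ω))) atTop ≤ lam1)
    {u : Fin k → ℝ} {c : ℝ} (hc : 0 < c) (hu : ∀ i, c ≤ u i) :
    Tendsto (fun n : ℕ => (n : ℝ)⁻¹ * log (l1norm (u ᵥ* matIter θ A n ω))) atTop (𝓝 lam1) := by
  have hnat : ∀ n i j, matIter θ A n ω i j ∈ (Nat.castRingHom ℝ).rangeS := by
    refine fun n => matIter_apply_mem θ A (fun ω i j => ?_) n ω
    rcases h01 ω i j with h | h <;> rw [h]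
    exacts [zero_mem _, one_mem _]
  have hM : ∀ n i j, 0 ≤ matIter θ A n ω i j := fun n i j => by
    obtain ⟨m, hm⟩ := hnat n i j
    rw [← hm]
    exact m.cast_nonneg
  have hS_log : ∀ n, 0 ≤ log (l1norm (1 ᵥ* matIter θ A n ω)) := fun n => by
    obtain ⟨m, hm⟩ : l1norm (1 ᵥ* matIter θ A n ω) ∈ (Nat.castRingHom ℝ).rangeS := by
      rw [l1norm_one_vecMul (hM n)]
      exact sum_mem fun i _ => sum_mem fun j _ => hnat n i j
    rw [← hm]
    exact log_natCast_nonneg m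
  have hlower : Tendsto (fun n : ℕ => (n : ℝ)⁻¹ *
      (log (l1norm (v₁ ᵥ* matIter θ A n ω)) - |log (l1norm v₁)|)) atTop (𝓝 lam1) :=
    tendsto_inv_mul_of_abs_sub_le hv₁ fun n => by rw [sub_sub_cancel_left, abs_neg, abs_abs]
  have hle : ∀ n, log (l1norm (v₁ ᵥ* matIter θ A n ω)) - |log (l1norm v₁)| ≤
      log (l1norm (1 ᵥ* matIter θ A n ω)) := fun n => by
    linarith [log_le_abs_log_add_of_le_mul (l1norm_nonneg _)
      (l1norm_vecMul_le_mul_l1norm_one_vecMul v₁ (hM n)) (hS_log n)]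
  have hbdd : IsBoundedUnder (· ≤ ·) atTop
      (fun n : ℕ => (n : ℝ)⁻¹ * log (l1norm (1 ᵥ* matIter θ A n ω))) := by
    have hA : ∀ ω i j, |A ω i j| ≤ 1 := fun ω i j => by
      rcases h01 ω i j with h | h <;> simp [h]
    refine isBoundedUnder_le_inv_mul_log (D := k) (fun n => l1norm_nonneg _) fun n => ?_
    refine (l1norm_vecMul_matIter_le θ A hA 1 n ω).trans_eq ?_
    simp [l1norm, pow_succ]
  have hS : Tendsto (fun n : ℕ => (n : ℝ)⁻¹ * log (l1norm (1 ᵥ* matIter θ A n ω)))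
      atTop (𝓝 lam1) :=
    tendsto_of_le_of_limsup_le hlower
      (Eventually.of_forall fun n => mul_le_mul_of_nonneg_left (hle n) (by positivity)) hb hbdd
  exact tendsto_inv_mul_of_abs_sub_le hS fun n =>
    abs_log_sub_log_le_of_mul_le_of_le_mul hc (l1norm_nonneg _)
      (mul_l1norm_one_vecMul_le hc.le hu (hM n)) (l1norm_vecMul_le_mul_l1norm_one_vecMul u (hM n))

theorem nonnegative_vector_attains_top_exponent_general
    {Ω : Type*}
    (θ : Ω → Ω)
    (k : ℕ)
    (A : Ω → Matrix (Fin k) (Fin k) ℝ)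
    (h01 : ∀ ω i j, A ω i j = 0 ∨ A ω i j = 1)
    (ω : Ω) (lam1 : ℝ) (N : ℕ)
    (hN : ∀ i j, 1 ≤ matIter θ A N ω i j)
    (ha : ∃ v₁ : Fin k → ℝ, v₁ ≠ 0 ∧
      Filter.Tendsto
        (fun n : ℕ => (n : ℝ)⁻¹ *
          Real.log (l1norm (Matrix.vecMul v₁ (matIter θ A n (θ^[N] ω)))))
        Filter.atTop (𝓝 lam1))
    (hb : ∀ w : Fin k → ℝ,
      Filter.limsup
        (fun n : ℕ => (n : ℝ)⁻¹ *
          Real.log (l1norm (Matrix.vecMul w (matIter θ A n (θ^[N] ω)))))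
        Filter.atTop ≤ lam1) :
    ∀ v : Fin k → ℝ, v ≠ 0 → (∀ i, 0 ≤ v i) →
      Filter.Tendsto
        (fun n : ℕ => (n : ℝ)⁻¹ * Real.log (l1norm (Matrix.vecMul v (matIter θ A n ω))))
        Filter.atTop (𝓝 lam1) := by
  intro v hv hv_nonneg
  obtain ⟨v₁, -, hv₁⟩ := ha
  have hu : ∀ j, l1norm v ≤ (v ᵥ* matIter θ A N ω) j := fun j => by
    simp only [l1norm, vecMul, dotProduct, abs_of_nonneg (hv_nonneg _)]
    exact Finset.sum_le_sum fun i _ => le_mul_of_one_le_right (hv_nonneg i) (hN i j)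
  have hlim := tendsto_inv_mul_log_l1norm_vecMul_matIter_of_pos θ A h01 (θ^[N] ω) v₁ hv₁ (hb 1)
    (l1norm_pos hv) hu
  refine (tendsto_add_atTop_iff_nat N).1 ((tendsto_inv_natCast_add_mul N hlim).congr fun n => ?_)
  rw [add_comm n N, vecMul_matIter_add]

/-- Fix `ω`, `λ₁ ∈ ℝ` and `N ∈ ℕ` such that every entry of `A^{(N)}(ω)` is
at least `1`.  Assume at `θ^N ω`: (a) there is a nonzero `v₁` with
`lim (1/n) log ‖v₁ A^{(n)}(θ^N ω)‖₁ = λ₁`, and (b) for every `w`,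
`limsup (1/n) log ‖w A^{(n)}(θ^N ω)‖₁ ≤ λ₁`.  Then for every nonzero nonnegative `v`, the
limit `lim (1/n) log ‖v A^{(n)}(ω)‖₁` exists and equals `λ₁`. -/
theorem nonnegative_vector_attains_top_exponent
    {Ω : Type*} [MeasurableSpace Ω]
    (ℙ : Measure Ω) [IsProbabilityMeasure ℙ]
    (θ : Ω → Ω) (hθ : MeasurePreserving θ ℙ ℙ) (hθinv : Function.Bijective θ)
    (k : ℕ) (hk : 2 ≤ k)
    (A : Ω → Matrix (Fin k) (Fin k) ℝ)
    (hAmeas : ∀ i j, Measurable fun ω => A ω i j)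
    (h01 : ∀ ω i j, A ω i j = 0 ∨ A ω i j = 1)
    (ω : Ω) (lam1 : ℝ) (N : ℕ)
    (hN : ∀ i j, 1 ≤ matIter θ A N ω i j)
    (ha : ∃ v₁ : Fin k → ℝ, v₁ ≠ 0 ∧
      Filter.Tendsto
        (fun n : ℕ => (n : ℝ)⁻¹ *
          Real.log (l1norm (Matrix.vecMul v₁ (matIter θ A n (θ^[N] ω)))))
        Filter.atTop (𝓝 lam1))
    (hb : ∀ w : Fin k → ℝ,
      Filter.limsup
        (fun n : ℕ => (n : ℝ)⁻¹ *
          Real.log (l1norm (Matrix.vecMul w (matIter θ A n (θ^[N] ω)))))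
        Filter.atTop ≤ lam1) :
    ∀ v : Fin k → ℝ, v ≠ 0 → (∀ i, 0 ≤ v i) →
      Filter.Tendsto
        (fun n : ℕ => (n : ℝ)⁻¹ * Real.log (l1norm (Matrix.vecMul v (matIter θ A n ω))))
        Filter.atTop (𝓝 lam1) :=
  nonnegative_vector_attains_top_exponent_general θ k A h01 ω lam1 N hN ha hb
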